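/- Let f : M → M be C¹ on a compact Riemannian manifold with Df(x) invertible everywhere, μ an f-invariant ergodic probability measure, and x a μ-generic point (Birkhoff averages of continuous functions converge to space averages along the orbit of x). If lim_{m→∞} (1/m) log ‖(Df^m(x))⁻¹‖⁻¹ = 0, then for every l ≥ 1, ∫ log ‖(Df^l(y))⁻¹‖⁻¹ dμ(y) ≤ 0. -/

import Mathlib

open MeasureTheory Filter Topology

/-- Abstract formalization: `Dinv n x` plays the role of `(Df^n(x))⁻¹`, so that
`‖Dinv n x‖⁻¹` is the conorm `‖(Df^n(x))⁻¹‖⁻¹`; `x₀` is a `μ`-generic point. -/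
theorem stmt_15 {M : Type*} [MetricSpace M] [CompactSpace M]
    [MeasurableSpace M] [BorelSpace M]
    {E : Type*} [NormedAddCommGroup E] [NormedSpace ℝ E] [Nontrivial E]
    (f : M → M) (hf : Continuous f)
    (D Dinv : ℕ → M → E →L[ℝ] E)
    (hDcont : ∀ n, Continuous fun x => D n x)
    (hDinvcont : ∀ n, Continuous fun x => Dinv n x)
    (hinv₁ : ∀ n x, (Dinv n x).comp (D n x) = ContinuousLinearMap.id ℝ E)
    (hinv₂ : ∀ n x, (D n x).comp (Dinv n x) = ContinuousLinearMap.id ℝ E)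
    (hcocycle : ∀ m n x, D (m + n) x = (D m (f^[n] x)).comp (D n x))
    (μ : Measure M) [IsProbabilityMeasure μ] (hμ : μ.map f = μ)
    (hergodic : Ergodic f μ)
    (x₀ : M)
    (hgen : ∀ (l : ℕ), 1 ≤ l → ∀ g : M → ℝ, Continuous g →
      Tendsto (fun m : ℕ => (1 / m : ℝ) * ∑ j ∈ Finset.range m, g (f^[j * l] x₀))
        atTop (𝓝 (∫ y, g y ∂μ)))
    (hlim : Tendsto (fun m : ℕ => (1 / m : ℝ) * Real.log (‖Dinv m x₀‖⁻¹))
      atTop (𝓝 0)) :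
    ∀ l : ℕ, 1 ≤ l → ∫ y, Real.log (‖Dinv l y‖⁻¹) ∂μ ≤ 0 := by
  intro l hl
  -- positivity of norms
  have hpos : ∀ n x, 0 < ‖Dinv n x‖ := by
    intro n x
    have h1 : (1:ℝ) ≤ ‖Dinv n x‖ * ‖D n x‖ := by
      calc (1:ℝ) = ‖ContinuousLinearMap.id ℝ E‖ := (ContinuousLinearMap.norm_id).symm
        _ = ‖(Dinv n x).comp (D n x)‖ := by rw [hinv₁]
        _ ≤ ‖Dinv n x‖ * ‖D n x‖ := ContinuousLinearMap.opNorm_comp_le _ _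
    rcases (norm_nonneg (Dinv n x)).lt_or_eq with h | h
    · exact h
    · rw [← h, zero_mul] at h1; linarith
  -- inverse of a composition
  have hDinv_comp : ∀ a b x, Dinv (a + b) x = (Dinv b x).comp (Dinv a (f^[b] x)) := by
    intro a b x
    have h1 : (D (a+b) x).comp ((Dinv b x).comp (Dinv a (f^[b] x))) =
        ContinuousLinearMap.id ℝ E := by
      rw [hcocycle a b x, ContinuousLinearMap.comp_assoc,
        ← ContinuousLinearMap.comp_assoc (D b x), hinv₂ b x,
        ContinuousLinearMap.id_comp, hinv₂ a]
    calc Dinv (a+b) x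
        = (Dinv (a+b) x).comp ((D (a+b) x).comp ((Dinv b x).comp (Dinv a (f^[b] x)))) := by
          rw [h1, ContinuousLinearMap.comp_id]
      _ = ((Dinv (a+b) x).comp (D (a+b) x)).comp ((Dinv b x).comp (Dinv a (f^[b] x))) := by
          rw [ContinuousLinearMap.comp_assoc]
      _ = (Dinv b x).comp (Dinv a (f^[b] x)) := by
          rw [hinv₁, ContinuousLinearMap.id_comp]
  -- superadditivity of the log-conorm
  have key : ∀ a b x, Real.log (‖Dinv b x‖⁻¹) + Real.log (‖Dinv a (f^[b] x)‖⁻¹) ≤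
      Real.log (‖Dinv (a+b) x‖⁻¹) := by
    intro a b x
    rw [Real.log_inv, Real.log_inv, Real.log_inv]
    have hle : ‖Dinv (a+b) x‖ ≤ ‖Dinv b x‖ * ‖Dinv a (f^[b] x)‖ := by
      rw [hDinv_comp]; exact ContinuousLinearMap.opNorm_comp_le _ _
    have h2 := Real.log_le_log (hpos (a+b) x) hle
    rw [Real.log_mul (ne_of_gt (hpos _ _)) (ne_of_gt (hpos _ _))] at h2
    linarith
  set g : M → ℝ := fun y => Real.log (‖Dinv l y‖⁻¹) with hg
  have gcont : Continuous g := by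
    apply Continuous.log
    · exact ((hDinvcont l).norm.inv₀ (fun y => ne_of_gt (hpos l y)))
    · intro y; exact inv_ne_zero (ne_of_gt (hpos l y))
  -- sum bound
  have hsum : ∀ m : ℕ, 1 ≤ m →
      ∑ j ∈ Finset.range m, g (f^[j * l] x₀) ≤ Real.log (‖Dinv (m * l) x₀‖⁻¹) := by
    intro m hm
    induction m, hm using Nat.le_induction with
    | base => simp [hg]
    | succ m hm ih =>
      rw [Finset.sum_range_succ]
      have hkey := key l (m * l) x₀
      have heq : l + m * l = (m + 1) * l := by ring
      rw [heq] at hkey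
      linarith
  have hgenl := hgen l hl g gcont
  -- RHS tendsto 0
  have htl : Tendsto (fun m : ℕ => m * l) atTop atTop :=
    tendsto_atTop_mono (fun m => Nat.le_mul_of_pos_right m hl) tendsto_id
  have hcomp : Tendsto (fun m : ℕ => (l : ℝ) * ((1 / (↑(m * l)) : ℝ) *
      Real.log (‖Dinv (m * l) x₀‖⁻¹))) atTop (𝓝 0) := by
    have := (hlim.comp htl).const_mul (l : ℝ)
    simpa using this
  have hRHS : Tendsto (fun m : ℕ => (1 / m : ℝ) * Real.log (‖Dinv (m * l) x₀‖⁻¹))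
      atTop (𝓝 0) := by
    apply hcomp.congr'
    filter_upwards [eventually_ge_atTop 1] with m hm
    have hm0 : (m : ℝ) ≠ 0 := Nat.cast_ne_zero.mpr (by omega)
    have hl0 : (l : ℝ) ≠ 0 := Nat.cast_ne_zero.mpr (by omega)
    rw [Nat.cast_mul]
    field_simp
  refine le_of_tendsto_of_tendsto hgenl hRHS ?_
  filter_upwards [eventually_ge_atTop 1] with m hm
  have h1 : (0:ℝ) ≤ 1 / m := by positivity
  exact mul_le_mul_of_nonneg_left (hsum m hm) h1
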